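/- arXiv:1608.08367 — 6 statements merged into one kernel-verified Lean document; each statement's English description precedes it below -/
import Mathlib

section
/- Let N be a binomial random variable with parameters n ≥ 1 and p ∈ (0,1]. Then E[1/(N - 1/2) | N > 0] ≤ 1/(np) + 9/(np)^2. -/
/-!
Write `q = 1 - p`. For `k ≥ 1` one has `1/(k - 1/2) ≤ 1/(k+1) + 9/((k+1)(k+2))`, so the conditional
expectation is bounded by `E[1/(N+1); N > 0] + 9 E[1/((N+1)(N+2)); N > 0]`. Both inverse moments
have closed forms, since `(n+1) C(n,k)/(k+1) = C(n+1,k+1)` and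
`(n+1)(n+2) C(n,k)/((k+1)(k+2)) = C(n+2,k+2)` turn them into tails of the binomial expansions of
`(p+q)^(n+1)` and `(p+q)^(n+2)`. After removing the `k = 0` terms they are at most
`(1 - q^n)/((n+1)p)` and `(1 - q^n)/((n+1)(n+2)p^2)`, and `1 - q^n = P(N > 0)` cancels.
-/

open Finset

section InverseMoments

variable {K : Type*} [Field K] [CharZero K]

theorem mul_sum_choose_mul_pow_div_succ (n : ℕ) (p q : K) :
    (n + 1) * p * ∑ k ∈ range (n + 1), n.choose k * p ^ k * q ^ (n - k) / (k + 1)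
      = (p + q) ^ (n + 1) - q ^ (n + 1) := by
  rw [mul_sum]
  trans ∑ k ∈ range (n + 1), p ^ (k + 1) * q ^ (n - k) * ((n + 1).choose (k + 1) : K)
  · refine sum_congr rfl fun k _ => ?_
    have hc : ((n : K) + 1) * n.choose k = (n + 1).choose (k + 1) * (k + 1) := by
      exact_mod_cast Nat.add_one_mul_choose_eq n k
    field_simp
    linear_combination p ^ (k + 1) * q ^ (n - k) * hc
  · rw [add_pow, sum_range_succ' _ (n + 1)]
    simp

theorem mul_sum_choose_mul_pow_div_succ_mul_succ_succ (n : ℕ) (p q : K) :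
    (n + 1) * (n + 2) * p ^ 2 *
        ∑ k ∈ range (n + 1), n.choose k * p ^ k * q ^ (n - k) / ((k + 1) * (k + 2))
      = (p + q) ^ (n + 2) - q ^ (n + 2) - (n + 2) * p * q ^ (n + 1) := by
  rw [mul_sum]
  trans ∑ k ∈ range (n + 1), p ^ (k + 2) * q ^ (n - k) * ((n + 2).choose (k + 2) : K)
  · refine sum_congr rfl fun k _ => ?_
    have hc : ((n : K) + 1) * (n + 2) * n.choose k
        = (n + 2).choose (k + 2) * ((k + 1) * (k + 2)) := by
      have h1 : ((n : K) + 1) * n.choose k = (n + 1).choose (k + 1) * (k + 1) := by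
        exact_mod_cast Nat.add_one_mul_choose_eq n k
      have h2 : ((n : K) + 2) * (n + 1).choose (k + 1) = (n + 2).choose (k + 2) * (k + 2) := by
        exact_mod_cast Nat.add_one_mul_choose_eq (n + 1) (k + 1)
      linear_combination (n + 2 : K) * h1 + (k + 1 : K) * h2
    have hk : (k : K) + 2 ≠ 0 := by exact_mod_cast (k + 1).succ_ne_zero
    field_simp
    linear_combination p ^ (k + 2) * q ^ (n - k) * hc
  · rw [add_pow, sum_range_succ' _ (n + 2), sum_range_succ' _ (n + 1)]
    simp
    ring

end InverseMoments

theorem sum_range_succ_eq_add_sum_Icc {M : Type*} [AddCommMonoid M] (n : ℕ) (f : ℕ → M) :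
    ∑ k ∈ range (n + 1), f k = f 0 + ∑ k ∈ Icc 1 n, f k := by
  rw [range_eq_Ico, sum_eq_sum_Ico_succ_bot n.succ_pos]
  rfl

theorem sum_Icc_choose_mul_pow_div_succ_le (n : ℕ) {p : ℝ} (hp : 0 < p) (hp1 : p ≤ 1) :
    ∑ k ∈ Icc 1 n, n.choose k * p ^ k * (1 - p) ^ (n - k) / (k + 1)
      ≤ (1 - (1 - p) ^ n) / ((n + 1) * p) := by
  have h := mul_sum_choose_mul_pow_div_succ n p (1 - p)
  rw [sum_range_succ_eq_add_sum_Icc, add_sub_cancel, one_pow] at h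
  simp only [Nat.choose_zero_right, Nat.cast_one, pow_zero, Nat.sub_zero, CharP.cast_eq_zero,
    zero_add, one_mul, div_one] at h
  rw [le_div_iff₀ (by positivity)]
  have hq : 0 ≤ (1 - p) ^ n := pow_nonneg (by linarith) n
  have hS : (∑ k ∈ Icc 1 n, n.choose k * p ^ k * (1 - p) ^ (n - k) / (k + 1)) * ((n + 1) * p)
      = 1 - (1 - p) ^ n - n * p * (1 - p) ^ n := by
    rw [pow_succ] at h
    linear_combination h
  rw [hS, sub_le_self_iff]
  positivity

theorem sum_Icc_choose_mul_pow_div_succ_mul_succ_succ_le (n : ℕ) {p : ℝ} (hp : 0 < p)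
    (hp1 : p ≤ 1) :
    ∑ k ∈ Icc 1 n, n.choose k * p ^ k * (1 - p) ^ (n - k) / ((k + 1) * (k + 2))
      ≤ (1 - (1 - p) ^ n) / ((n + 1) * (n + 2) * p ^ 2) := by
  have h := mul_sum_choose_mul_pow_div_succ_mul_succ_succ n p (1 - p)
  rw [sum_range_succ_eq_add_sum_Icc, add_sub_cancel, one_pow] at h
  simp only [Nat.choose_zero_right, Nat.cast_one, pow_zero, Nat.sub_zero, CharP.cast_eq_zero,
    zero_add, one_mul] at h
  rw [le_div_iff₀ (by positivity)]
  have hq : 0 ≤ (1 - p) ^ n := pow_nonneg (by linarith) n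
  have hS : (∑ k ∈ Icc 1 n, n.choose k * p ^ k * (1 - p) ^ (n - k) / ((k + 1) * (k + 2)))
        * ((n + 1) * (n + 2) * p ^ 2)
      = 1 - (1 - p) ^ n - n * p * (1 - p) ^ n * (1 + (n + 1) * p / 2) := by
    rw [pow_succ, pow_succ, pow_succ] at h
    linear_combination h
  rw [hS, sub_le_self_iff]
  positivity

theorem one_div_sub_half_le {k : ℝ} (hk : 1 ≤ k) :
    1 / (k - 1 / 2) ≤ 1 / (k + 1) + 9 / ((k + 1) * (k + 2)) := by
  rw [div_add_div _ _ (by positivity) (by positivity),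
    div_le_div_iff₀ (by linarith) (by positivity)]
  -- cleared of denominators the difference is `15 (k - 1) / 2`
  nlinarith

open Finset in
/-- For `N ~ Binomial(n, p)` with `n ≥ 1` and `p ∈ (0,1]`,
`E[1/(N - 1/2) | N > 0] ≤ 1/(np) + 9/(np)²`. -/
theorem stmt_1 (n : ℕ) (hn : 1 ≤ n) (p : ℝ) (hp : 0 < p) (hp1 : p ≤ 1) :
    (∑ k ∈ Finset.Icc 1 n,
        (n.choose k : ℝ) * p ^ k * (1 - p) ^ (n - k) * (1 / ((k : ℝ) - 1/2)))
      / (1 - (1 - p) ^ n)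
    ≤ 1 / (n * p) + 9 / (n * p) ^ 2 := by
  have hpos : 0 < 1 - (1 - p) ^ n := by
    have : (1 - p) ^ n < 1 := pow_lt_one₀ (by linarith) (by linarith) (by omega)
    linarith
  rw [div_le_iff₀ hpos]
  calc ∑ k ∈ Icc 1 n, (n.choose k : ℝ) * p ^ k * (1 - p) ^ (n - k) * (1 / ((k : ℝ) - 1 / 2))
      ≤ ∑ k ∈ Icc 1 n, (n.choose k * p ^ k * (1 - p) ^ (n - k) / (k + 1)
          + 9 * (n.choose k * p ^ k * (1 - p) ^ (n - k) / ((k + 1) * (k + 2)))) := by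
        refine sum_le_sum fun k hk => ?_
        have hk1 : (1 : ℝ) ≤ k := by exact_mod_cast (mem_Icc.mp hk).1
        have hb : (0 : ℝ) ≤ n.choose k * p ^ k * (1 - p) ^ (n - k) := by
          have : 0 ≤ 1 - p := by linarith
          positivity
        calc _ ≤ (n.choose k : ℝ) * p ^ k * (1 - p) ^ (n - k)
              * (1 / (k + 1) + 9 / ((k + 1) * (k + 2))) := by
              gcongr
              exact one_div_sub_half_le hk1
          _ = _ := by ring
    _ ≤ (1 - (1 - p) ^ n) / ((n + 1) * p)
          + 9 * ((1 - (1 - p) ^ n) / ((n + 1) * (n + 2) * p ^ 2)) := by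
        rw [sum_add_distrib, ← mul_sum]
        gcongr
        · exact sum_Icc_choose_mul_pow_div_succ_le n hp hp1
        · exact sum_Icc_choose_mul_pow_div_succ_mul_succ_succ_le n hp hp1
    _ ≤ (1 - (1 - p) ^ n) / (n * p) + 9 * ((1 - (1 - p) ^ n) / (n * p) ^ 2) := by
        gcongr
        · linarith
        · nlinarith
    _ = (1 / (n * p) + 9 / (n * p) ^ 2) * (1 - (1 - p) ^ n) := by ring
end

section
/- Let (p_j)_{j≥1} be a probability mass function on ℕ₊ and i ≥ 1. Let ν̄(x) = #{j : p_j ≥ x} be the counting function and ν₁(0, x) = Σ_j p_j 1_{p_j < x} (probabilities strictly below x may be replaced by ≤ x, either convention works with the bound as stated for p_j ≤ 1/i). Then ((e−1)/e)·ν̄(1/i) ≤ E K_i ≤ ν̄(1/i) + i·ν₁(0, 1/i), where E K_i = Σ_j (1 − (1−p_j)^i). -/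
/-! Each symbol `j` contributes `1 - (1 - p_j)^i` to `E K_i`. A symbol with `p_j ≥ 1/i`
contributes at least `1 - (1 - 1/i)^i ≥ 1 - e⁻¹` and at most `1`, while by Bernoulli's
inequality any other symbol contributes at most `i p_j`. -/

open Real

section Pointwise

variable {x : ℝ}

lemma one_sub_one_sub_pow_nonneg (h0 : 0 ≤ x) (h1 : x ≤ 1) (n : ℕ) : 0 ≤ 1 - (1 - x) ^ n :=
  sub_nonneg.2 (pow_le_one₀ (by linarith) (by linarith))

lemma one_sub_one_sub_pow_le_one (h1 : x ≤ 1) (n : ℕ) : 1 - (1 - x) ^ n ≤ 1 :=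
  sub_le_self _ (pow_nonneg (by linarith) n)

lemma one_sub_one_sub_pow_le_mul (h2 : x ≤ 2) (n : ℕ) : 1 - (1 - x) ^ n ≤ n * x := by
  have := one_add_mul_le_pow (a := -x) (by linarith) n
  rw [← sub_eq_add_neg, mul_neg, ← sub_eq_add_neg] at this
  linarith

lemma one_sub_exp_neg_one_le_one_sub_one_sub_pow {n : ℕ} (hn : 0 < n) (hx : 1 / (n : ℝ) ≤ x)
    (h1 : x ≤ 1) : 1 - exp (-1) ≤ 1 - (1 - x) ^ n := by
  have hn' : (1 : ℝ) ≤ n := by exact_mod_cast hn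
  have : (1 - x) ^ n ≤ (1 - 1 / (n : ℝ)) ^ n := pow_le_pow_left₀ (by linarith) (by linarith) n
  linarith [one_sub_div_pow_le_exp_neg hn']

end Pointwise

section Sums

variable {α : Type*} {f g : α → ℝ} {S : Set α}

lemma Summable.finite_setOf_le (hf : Summable f) {ε : ℝ} (hε : 0 < ε) :
    {j | ε ≤ f j}.Finite :=
  (Filter.eventually_cofinite.mp (hf.tendsto_cofinite_zero.eventually_lt_const hε)).subset
    fun _ hj => not_lt.2 hj

-- `Nat.card S = 0` when `S` is infinite.
lemma mul_natCard_le_tsum {c : ℝ} (hf0 : ∀ j, 0 ≤ f j) (hf : Summable f)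
    (hS : ∀ j ∈ S, c ≤ f j) : c * Nat.card S ≤ ∑' j, f j := by
  rcases S.finite_or_infinite with hfin | hinf
  · have : Finite S := hfin
    calc c * Nat.card S = ∑' _ : S, c := by rw [tsum_const, nsmul_eq_mul, mul_comm]
      _ ≤ ∑' j : S, f j :=
        Summable.tsum_le_tsum (fun j => hS j j.2) (.of_finite) (hf.subtype _)
      _ ≤ ∑' j, f j := hf.tsum_subtype_le f S hf0
  · have : Infinite S := hinf.to_subtype
    simpa [Nat.card_eq_zero_of_infinite] using tsum_nonneg hf0

lemma tsum_le_natCard_add_tsum (hS : S.Finite) (hf : Summable f) (hg : Summable g)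
    (hfS : ∀ j ∈ S, f j ≤ 1) (hgS : ∀ j ∈ S, 0 ≤ g j) (hfg : ∀ j ∉ S, f j ≤ g j) :
    ∑' j, f j ≤ Nat.card S + ∑' j, g j := by
  have : Finite S := hS
  have hind : Summable (S.indicator 1 : α → ℝ) := by
    rw [← summable_subtype_iff_indicator]
    exact .of_finite
  have hle : ∀ j, f j ≤ S.indicator 1 j + g j := by
    intro j
    by_cases hj : j ∈ S
    · simp only [Set.indicator_of_mem hj, Pi.one_apply]
      linarith [hfS j hj, hgS j hj]
    · simpa [Set.indicator_of_notMem hj] using hfg j hj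
  calc ∑' j, f j ≤ ∑' j, (S.indicator 1 j + g j) := Summable.tsum_le_tsum hle hf (hind.add hg)
    _ = Nat.card S + ∑' j, g j := by
      rw [Summable.tsum_add hind hg, ← tsum_subtype]
      simp only [Pi.one_apply, tsum_const, nsmul_one]

end Sums

/-- Lower and upper bounds on the expected number of distinct symbols
`E K_i = Σ_j (1 - (1 - p_j)^i)` in terms of the counting function
`ν̄(x) = #{j : p_j ≥ x}` and the small-probability mass `ν₁(0,1/i] = Σ_{p_j ≤ 1/i} p_j`. -/
theorem stmt_4 (p : ℕ → ℝ) (hp : ∀ j, 0 ≤ p j) (hsum : HasSum p 1) (i : ℕ) (hi : 1 ≤ i) :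
    ((Real.exp 1 - 1) / Real.exp 1) * (Nat.card {j : ℕ | 1 / (i : ℝ) ≤ p j} : ℝ)
      ≤ (∑' j, (1 - (1 - p j) ^ i)) ∧
    (∑' j, (1 - (1 - p j) ^ i))
      ≤ (Nat.card {j : ℕ | 1 / (i : ℝ) ≤ p j} : ℝ)
        + i * (∑' j, if p j ≤ 1 / (i : ℝ) then p j else 0) := by
  have hp1 : ∀ j, p j ≤ 1 := fun j => le_hasSum hsum j fun k _ => hp k
  have hK0 : ∀ j, 0 ≤ 1 - (1 - p j) ^ i := fun j => one_sub_one_sub_pow_nonneg (hp j) (hp1 j) i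
  have hKsum : Summable fun j => 1 - (1 - p j) ^ i :=
    .of_nonneg_of_le hK0 (fun j => one_sub_one_sub_pow_le_mul (by linarith [hp1 j]) i)
      (hsum.summable.mul_left (i : ℝ))
  have hq0 : ∀ j, 0 ≤ if p j ≤ 1 / (i : ℝ) then p j else 0 := fun j => by
    split_ifs <;> simp [hp j]
  have hqsum : Summable fun j => if p j ≤ 1 / (i : ℝ) then p j else 0 :=
    .of_nonneg_of_le hq0 (fun j => by split_ifs <;> simp [hp j]) hsum.summable
  have hexp : (exp 1 - 1) / exp 1 = 1 - exp (-1) := by rw [exp_neg]; field_simp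
  constructor
  · rw [hexp]
    exact mul_natCard_le_tsum hK0 hKsum fun j hj =>
      one_sub_exp_neg_one_le_one_sub_one_sub_pow hi hj (hp1 j)
  · rw [← tsum_mul_left]
    refine tsum_le_natCard_add_tsum (hsum.summable.finite_setOf_le (by positivity)) hKsum
      (hqsum.mul_left _) (fun j _ => one_sub_one_sub_pow_le_one (hp1 j) i)
      (fun j _ => mul_nonneg i.cast_nonneg (hq0 j)) fun j hj => ?_
    have hj : p j ≤ 1 / (i : ℝ) := le_of_lt (not_le.1 hj)
    rw [if_pos hj]
    exact one_sub_one_sub_pow_le_mul (by linarith [hp1 j]) i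
end

section
/- Let N ~ Poisson(μ) with μ ≥ 1. Then the Shannon entropy (in nats) satisfies H(N) ≤ (ln μ)/2 + 3. -/
/-!
Since `-log p_k = μ - k log μ + log k!`, Stirling's upper bound
`log k! ≤ k log k - k + (log k) / 2 + 1` together with the tangent-line bound
`log x ≤ log μ + x / μ - 1` gives, for `μ ≥ 1`, the pointwise estimate
`-log p_k ≤ (k - μ)² / μ + k / (2μ) + (log μ) / 2 + 1`.
Averaging against `p`, the Poisson variance and mean (both `μ`) turn this into
`H ≤ (log μ) / 2 + 5 / 2`.
-/

open Real Stirling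
open scoped Nat

noncomputable def poissonWeight (μ : ℝ) (k : ℕ) : ℝ := exp (-μ) * μ ^ k / k !

lemma poissonWeight_pos {μ : ℝ} (hμ : 0 < μ) (k : ℕ) : 0 < poissonWeight μ k := by
  unfold poissonWeight
  positivity

lemma poissonWeight_le_one {μ : ℝ} (hμ : 0 ≤ μ) (k : ℕ) : poissonWeight μ k ≤ 1 :=
  calc poissonWeight μ k = exp (-μ) * (μ ^ k / k !) := mul_div_assoc _ _ _
    _ ≤ exp (-μ) * exp μ := by gcongr; exact pow_div_factorial_le_exp μ hμ k
    _ = 1 := by rw [← exp_add, neg_add_cancel, exp_zero]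

lemma neg_log_poissonWeight {μ : ℝ} (hμ : 0 < μ) (k : ℕ) :
    -log (poissonWeight μ k) = μ - k * log μ + log k ! := by
  rw [poissonWeight, log_div (by positivity) (by positivity),
    log_mul (by positivity) (by positivity), log_exp, log_pow]
  ring

lemma hasSum_of_hasSum_succ {f : ℕ → ℝ} {a : ℝ} (h0 : f 0 = 0)
    (h : HasSum (fun k ↦ f (k + 1)) a) : HasSum f a := by
  rw [← hasSum_nat_add_iff' 1]
  simpa [h0] using h

section Moments

variable (μ : ℝ)

lemma succ_mul_poissonWeight_succ (k : ℕ) :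
    (k + 1 : ℝ) * poissonWeight μ (k + 1) = μ * poissonWeight μ k := by
  simp only [poissonWeight, Nat.factorial_succ, pow_succ, Nat.cast_mul, Nat.cast_succ]
  field_simp

lemma hasSum_poissonWeight : HasSum (poissonWeight μ) 1 := by
  have hexp : HasSum (fun k : ℕ ↦ μ ^ k / k !) (exp μ) := by
    rw [exp_eq_exp_ℝ]
    exact NormedSpace.expSeries_div_hasSum_exp μ
  have h := hexp.mul_left (exp (-μ))
  rw [← exp_add, neg_add_cancel, exp_zero] at h
  exact h.congr_fun fun k ↦ mul_div_assoc _ _ _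

lemma hasSum_mul_poissonWeight : HasSum (fun k : ℕ ↦ k * poissonWeight μ k) μ := by
  refine hasSum_of_hasSum_succ (by simp) ?_
  simpa only [Nat.cast_succ, succ_mul_poissonWeight_succ, mul_one]
    using (hasSum_poissonWeight μ).mul_left μ

lemma hasSum_mul_sub_one_mul_poissonWeight :
    HasSum (fun k : ℕ ↦ k * (k - 1) * poissonWeight μ k) (μ ^ 2) := by
  refine hasSum_of_hasSum_succ (by simp) ?_
  have h (k : ℕ) : ((k + 1 : ℕ) : ℝ) * ((k + 1 : ℕ) - 1) * poissonWeight μ (k + 1) =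
      μ * (k * poissonWeight μ k) := by
    rw [Nat.cast_succ, add_sub_cancel_right, mul_right_comm, succ_mul_poissonWeight_succ]
    ring
  simpa only [h, sq, mul_assoc] using (hasSum_mul_poissonWeight μ).mul_left μ

lemma hasSum_sub_sq_mul_poissonWeight :
    HasSum (fun k : ℕ ↦ (k - μ) ^ 2 * poissonWeight μ k) μ := by
  have h := ((hasSum_mul_sub_one_mul_poissonWeight μ).add
    ((hasSum_mul_poissonWeight μ).mul_left (1 - 2 * μ))).add
    ((hasSum_poissonWeight μ).mul_left (μ ^ 2))
  rw [show μ ^ 2 + (1 - 2 * μ) * μ + μ ^ 2 * 1 = μ by ring] at h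
  exact h.congr_fun fun k ↦ by ring

end Moments

/-- `stirlingSeq` decreases from `stirlingSeq 1 = e / √2`, so `k! ≤ e √k (k / e) ^ k`. -/
lemma log_factorial_le (k : ℕ) : log k ! ≤ k * log k - k + log k / 2 + 1 := by
  rcases k.eq_zero_or_pos with rfl | hk
  · simp
  obtain ⟨j, rfl⟩ := Nat.exists_eq_succ_of_ne_zero hk.ne'
  have hseq : stirlingSeq (j + 1) ≤ stirlingSeq 1 := stirlingSeq'_antitone (Nat.zero_le j)
  have hk' : (0 : ℝ) < (j + 1 : ℕ) := by exact_mod_cast hk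
  have := log_le_log (stirlingSeq'_pos _) hseq
  rw [log_stirlingSeq_formula, stirlingSeq_one, log_div (exp_ne_zero 1) (by positivity), log_exp,
    log_sqrt zero_le_two, log_mul two_ne_zero hk'.ne', log_div hk'.ne' (exp_ne_zero 1),
    log_exp] at this
  linarith

lemma log_le_log_add_div_sub_one {x μ : ℝ} (hx : 0 < x) (hμ : 0 < μ) :
    log x ≤ log μ + x / μ - 1 := by
  have := log_le_sub_one_of_pos (div_pos hx hμ)
  rw [log_div hx.ne' hμ.ne'] at this
  linarith

lemma neg_log_poissonWeight_le {μ : ℝ} (hμ : 1 ≤ μ) (k : ℕ) :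
    -log (poissonWeight μ k) ≤ (k - μ) ^ 2 / μ + k / (2 * μ) + log μ / 2 + 1 := by
  have hμ0 : 0 < μ := by linarith
  rw [neg_log_poissonWeight hμ0]
  rcases k.eq_zero_or_pos with rfl | hk
  · simp [sq, hμ0.ne']
    linarith [log_nonneg hμ]
  have hk' : (0 : ℝ) < k := by exact_mod_cast hk
  have htan := log_le_log_add_div_sub_one hk' hμ0
  have hsq : (k - μ) ^ 2 / μ = k * (k / μ) - 2 * k + μ := by field_simp; ring
  have hhalf : k / (2 * μ) = k / μ / 2 := by field_simp
  linarith [log_factorial_le k, mul_le_mul_of_nonneg_left htan hk'.le, div_pos hk' hμ0]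

lemma hasSum_poissonWeight_mul_neg_log_bound {μ : ℝ} (hμ : 0 < μ) :
    HasSum (fun k : ℕ ↦ poissonWeight μ k * ((k - μ) ^ 2 / μ + k / (2 * μ) + log μ / 2 + 1))
      (log μ / 2 + 5 / 2) := by
  have h := (((hasSum_sub_sq_mul_poissonWeight μ).div_const μ).add
    ((hasSum_mul_poissonWeight μ).div_const (2 * μ))).add
    ((hasSum_poissonWeight μ).mul_left (log μ / 2 + 1))
  rw [show μ / μ + μ / (2 * μ) + (log μ / 2 + 1) * 1 = log μ / 2 + 5 / 2 by
    field_simp; ring] at h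
  exact h.congr_fun fun k ↦ by ring

/-- For `N ~ Poisson(μ)` with `μ ≥ 1`, the Shannon entropy in nats satisfies
`H(N) ≤ (ln μ)/2 + 3`. -/
theorem stmt_8 (μ : ℝ) (hμ : 1 ≤ μ) :
    -(∑' k : ℕ, (Real.exp (-μ) * μ ^ k / (Nat.factorial k : ℝ)) *
        Real.log (Real.exp (-μ) * μ ^ k / (Nat.factorial k : ℝ)))
      ≤ Real.log μ / 2 + 3 := by
  have hμ0 : 0 < μ := by linarith
  have hbound := hasSum_poissonWeight_mul_neg_log_bound hμ0
  have hle (k : ℕ) : negMulLog (poissonWeight μ k) ≤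
      poissonWeight μ k * ((k - μ) ^ 2 / μ + k / (2 * μ) + log μ / 2 + 1) := by
    rw [negMulLog, neg_mul, ← mul_neg]
    exact mul_le_mul_of_nonneg_left (neg_log_poissonWeight_le hμ k) (poissonWeight_pos hμ0 k).le
  have hnonneg (k : ℕ) : 0 ≤ negMulLog (poissonWeight μ k) :=
    negMulLog_nonneg (poissonWeight_pos hμ0 k).le (poissonWeight_le_one hμ0.le k)
  calc -(∑' k : ℕ, poissonWeight μ k * log (poissonWeight μ k))
      = ∑' k : ℕ, negMulLog (poissonWeight μ k) := by simp only [negMulLog, neg_mul, tsum_neg]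
    _ ≤ log μ / 2 + 5 / 2 := by
      rw [← hbound.tsum_eq]
      exact (hbound.summable.of_nonneg_of_le hnonneg hle).tsum_le_tsum hle hbound.summable
    _ ≤ log μ / 2 + 3 := by linarith
end

section
/- For all μ > 0, Σ_{k≥1} e^{−μ} μ^k/k! · k·ln k ≤ μ·ln(1+μ). -/
/-!
For `N ~ Poisson(μ)` the size-bias identity `n P(N = n) = μ P(N = n - 1)` gives
`E[N ln N] = μ E[ln(N + 1)]`, and Jensen's inequality for the concave logarithm bounds
`E[ln(N + 1)]` by `ln(E N + 1) = ln(1 + μ)`.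
-/

open MeasureTheory Real
open scoped NNReal Nat

namespace ProbabilityTheory

variable (r : ℝ≥0)

lemma poisson_mass_succ_mul (n : ℕ) :
    exp (-r) * r ^ (n + 1) / (n + 1)! * (n + 1 : ℕ) = r * (exp (-r) * r ^ n / n !) := by
  rw [Nat.factorial_succ]
  push_cast
  field_simp
  ring

lemma integrable_natCast_mul_poissonMeasure {g : ℕ → ℝ}
    (hg : Integrable (fun n ↦ g (n + 1)) Po(r)) :
    Integrable (fun n : ℕ ↦ (n : ℝ) * g n) Po(r) := by
  rw [integrable_poissonMeasure_iff] at hg ⊢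
  rw [← summable_nat_add_iff 1]
  refine (hg.mul_left (r : ℝ)).congr fun n ↦ ?_
  rw [norm_mul, Real.norm_natCast, ← mul_assoc, ← mul_assoc, poisson_mass_succ_mul]

lemma integral_natCast_mul_poissonMeasure (g : ℕ → ℝ) :
    ∫ n, (n : ℝ) * g n ∂Po(r) = r * ∫ n, g (n + 1) ∂Po(r) := by
  simp only [integral_poissonMeasure, smul_eq_mul]
  rw [← tsum_mul_left, ← (add_left_injective 1).tsum_eq]
  · congr with n
    rw [← mul_assoc, ← mul_assoc, ← poisson_mass_succ_mul]
  · rintro (_ | m) hn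
    · simp at hn
    · exact ⟨m, rfl⟩

lemma integrable_natCast_poissonMeasure : Integrable (fun n : ℕ ↦ (n : ℝ)) Po(r) := by
  simpa using integrable_natCast_mul_poissonMeasure r (g := fun _ ↦ 1) (integrable_const 1)

lemma integral_natCast_poissonMeasure : ∫ n, (n : ℝ) ∂Po(r) = r := by
  simpa using integral_natCast_mul_poissonMeasure r (fun _ ↦ 1)

lemma integral_log_succ_poissonMeasure_le : ∫ n, log (n + 1) ∂Po(r) ≤ log (r + 1) := by
  have hint : Integrable (fun n : ℕ ↦ (n : ℝ) + 1) Po(r) :=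
    (integrable_natCast_poissonMeasure r).add (integrable_const 1)
  have hconc : ConcaveOn ℝ (Set.Ici 1) log :=
    strictConcaveOn_log_Ioi.concaveOn.subset (Set.Ici_subset_Ioi.2 one_pos) (convex_Ici 1)
  have hlog : Integrable (fun n : ℕ ↦ log ((n : ℝ) + 1)) Po(r) := by
    refine hint.mono' .of_discrete (ae_of_all _ fun n ↦ ?_)
    have hn : (1 : ℝ) ≤ n + 1 := by simp
    rw [Real.norm_of_nonneg (log_nonneg hn)]
    linarith [log_le_sub_one_of_pos (zero_lt_one.trans_le hn)]
  have := hconc.le_map_integral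
    (continuousOn_log.mono fun x hx ↦ (zero_lt_one.trans_le hx).ne') isClosed_Ici
    (ae_of_all _ fun n : ℕ ↦ (by simp : (n : ℝ) + 1 ∈ Set.Ici 1)) hint hlog
  rwa [integral_add (integrable_natCast_poissonMeasure r) (integrable_const 1),
    integral_natCast_poissonMeasure, integral_const, probReal_univ, smul_eq_mul, mul_one] at this

end ProbabilityTheory

open ProbabilityTheory

/-- For `N ~ Poisson(μ)`, `E[N ln N] ≤ μ ln(1+μ)` (with the convention `0·ln 0 = 0`). -/
theorem stmt_9 (μ : ℝ) (hμ : 0 < μ) :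
    (∑' k : ℕ, Real.exp (-μ) * μ ^ k / (Nat.factorial k : ℝ) * ((k : ℝ) * Real.log k))
      ≤ μ * Real.log (1 + μ) := by
  lift μ to ℝ≥0 using hμ.le
  calc _ = ∫ n, (n : ℝ) * log n ∂Po(μ) := (integral_poissonMeasure μ _).symm
    _ = μ * ∫ n, log ((n : ℝ) + 1) ∂Po(μ) := by
      simpa using integral_natCast_mul_poissonMeasure μ (fun n ↦ log n)
    _ ≤ μ * log (1 + μ) := by
      rw [add_comm 1]
      exact mul_le_mul_of_nonneg_left (integral_log_succ_poissonMeasure_le μ) μ.2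
end

section
/- Karamata's integration theorem (divergent case): if g : [t₀, ∞) → (0, ∞) is locally bounded, measurable, and regularly varying with index α > −1 (i.e. g(tx)/g(t) → x^α as t → ∞ for every x > 0), then ∫_{t₀}^t g(s) ds ~ t·g(t)/(α+1) as t → ∞. -/
/-!
Substituting `s = t * u` turns the quotient into `(α + 1) * ∫ u in (t₀/t, 1], g (t u) / g t`.
The integrand tends to `u ^ α` pointwise, so dominated convergence gives the limit
`(α + 1) * ∫₀¹ u ^ α du = 1`. The dominating function `D * u ^ β` (with `-1 < β < α`, `β ≤ 0`)
comes from a Potter-type bound: in logarithmic coordinates the slowly varying part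
`h u = log g (exp u) - α u` has increments `h (u + v) - h u → 0`; a Steinhaus-type measure
argument bounds them uniformly for `v ∈ [-1, 0]` and large `u`, and chaining unit steps yields
`|h (u + v) - h u| ≤ C + ε |v|`.
-/

open Filter MeasureTheory Set Topology Real
open scoped ENNReal

theorem eventually_lt_measure_inter_biInter_abs_le {X : Type*} [MeasurableSpace X]
    (μ : Measure X) {f : ℕ → X → ℝ} (hf : ∀ x, Tendsto (fun m => f m x) atTop (𝓝 0))
    {δ : ℝ} (hδ : 0 < δ) {s : Set X} {c : ℝ≥0∞} (hc : c < μ s) :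
    ∀ᶠ N in atTop, c < μ (s ∩ ⋂ m ≥ N, {x | |f m x| ≤ δ}) := by
  have hmono : Monotone fun N => s ∩ ⋂ m ≥ N, {x | |f m x| ≤ δ} := fun a b hab =>
    inter_subset_inter_right _ (biInter_subset_biInter_left fun m hm => hab.trans hm)
  have hunion : ⋃ N, s ∩ ⋂ m ≥ N, {x | |f m x| ≤ δ} = s := by
    refine (iUnion_subset fun _ => inter_subset_left).antisymm fun x hx => ?_
    obtain ⟨N, hN⟩ := eventually_atTop.1 ((hf x).abs.eventually (eventually_le_nhds (by simpa)))
    exact mem_iUnion.2 ⟨N, hx, mem_iInter₂.2 hN⟩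
  have := tendsto_measure_iUnion_atTop (μ := μ) hmono
  rw [hunion] at this
  exact this.eventually (eventually_gt_nhds hc)

theorem exists_abs_sub_le_of_tendsto_sub {h : ℝ → ℝ} (hmeas : Measurable h)
    (hh : ∀ v, Tendsto (fun u => h (u + v) - h u) atTop (𝓝 0)) :
    ∃ U M, ∀ u ≥ U, ∀ v ∈ Icc (-1 : ℝ) 0, |h (u + v) - h u| ≤ M := by
  by_contra! hcon
  choose u hu v hv hlarge using fun n : ℕ => hcon n n
  have hu_top : Tendsto u atTop atTop := tendsto_atTop_mono hu tendsto_natCast_atTop_atTop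
  have huv_top : Tendsto (fun m => u m + v m) atTop atTop :=
    tendsto_atTop_add_right_of_le _ (-1) hu_top fun m => (hv m).1
  have hA : ∀ w, Tendsto (fun m => h (u m + v m) - h (u m + v m - w)) atTop (𝓝 0) := fun w => by
    simpa [Function.comp_def, sub_eq_add_neg] using
      (hh w).comp (tendsto_atTop_add_const_right _ (-w) huv_top)
  have hC : ∀ z, Tendsto (fun m => h (u m + z) - h (u m)) atTop (𝓝 0) := fun z =>
    (hh z).comp hu_top
  have h5 : (5 : ℝ≥0∞) < volume (Icc (-3 : ℝ) 3) := by rw [Real.volume_Icc]; norm_num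
  obtain ⟨N, hAN, hCN⟩ := ((eventually_lt_measure_inter_biInter_abs_le volume hA one_pos h5).and
    (eventually_lt_measure_inter_biInter_abs_le volume hC one_pos h5)).exists
  set m := max N 3
  set A := Icc (-3 : ℝ) 3 ∩ ⋂ m ≥ N, {w | |h (u m + v m) - h (u m + v m - w)| ≤ 1}
  set C := Icc (-3 : ℝ) 3 ∩ ⋂ m ≥ N, {z | |h (u m + z) - h (u m)| ≤ 1}
  have hCmeas : MeasurableSet C := by
    refine measurableSet_Icc.inter (.iInter fun m => .iInter fun _ => ?_)
    exact measurableSet_le (by fun_prop) measurable_const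
  have hpres := Measure.measurePreserving_sub_left volume (v m)
  -- `A` and `v m - C` have measure `> 5` each inside `[-4, 3]`; a common point `w` splits
  -- `h (u m + v m) - h (u m)` into two increments of size at most `1`.
  obtain ⟨w, hwA, hwC⟩ : (A ∩ (fun w => v m - w) ⁻¹' C).Nonempty := by
    refine nonempty_inter_of_measure_lt_add volume (hCmeas.preimage hpres.measurable)
      (u := Icc (-4) 3) (fun w hw => ?_) (fun w hw => ?_) ?_
    · exact ⟨by linarith [hw.1.1], hw.1.2⟩
    · have := hw.1; have := hv m; simp only [mem_Icc] at *; constructor <;> linarith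
    · rw [hpres.measure_preimage hCmeas.nullMeasurableSet, Real.volume_Icc]
      calc ENNReal.ofReal (3 - -4) < 5 + 5 := by norm_num
        _ < volume A + volume C := ENNReal.add_lt_add hAN hCN
  have e1 : |h (u m + v m) - h (u m + v m - w)| ≤ 1 := mem_iInter₂.1 hwA.2 m (le_max_left _ _)
  have e2 : |h (u m + (v m - w)) - h (u m)| ≤ 1 := mem_iInter₂.1 hwC.2 m (le_max_left _ _)
  have hm3 : (3 : ℝ) ≤ m := by exact_mod_cast le_max_right N 3
  have := (hlarge m).trans_le (abs_sub_le _ (h (u m + v m - w)) _)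
  rw [← add_sub_assoc] at e2
  linarith

theorem exists_abs_sub_le_add_mul_of_tendsto_sub {h : ℝ → ℝ} (hmeas : Measurable h)
    (hh : ∀ v, Tendsto (fun u => h (u + v) - h u) atTop (𝓝 0)) {ε : ℝ} (hε : 0 < ε) :
    ∃ U C, ∀ p v, v ≤ 0 → U ≤ p + v → |h (p + v) - h p| ≤ C + ε * -v := by
  obtain ⟨U₀, M, hM⟩ := exists_abs_sub_le_of_tendsto_sub hmeas hh
  obtain ⟨U₁, hU₁⟩ := eventually_atTop.1
    ((hh (-1)).abs.eventually (eventually_le_nhds (by simpa using hε)))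
  have hsteps : ∀ n : ℕ, ∀ p, max U₀ U₁ ≤ p - n → |h (p - n) - h p| ≤ n * ε := by
    intro n
    induction n with
    | zero => simp
    | succ n ih =>
      intro p hp
      have hpn : max U₀ U₁ ≤ p - n := by push_cast at hp; linarith
      have hstep : |h (p - n + -1) - h (p - n)| ≤ ε := hU₁ _ (le_of_max_le_right hpn)
      have := abs_sub_le (h (p - n + -1)) (h (p - n)) (h p)
      rw [show p - ↑(n + 1) = p - n + -1 by push_cast; ring]
      push_cast
      linarith [ih p hpn]
  refine ⟨max U₀ U₁, M, fun p v hv hpv => ?_⟩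
  set n := ⌊-v⌋₊
  have hn : (n : ℝ) ≤ -v := Nat.floor_le (by linarith)
  have hn' : -v < n + 1 := Nat.lt_floor_add_one _
  have hrest : |h (p - n + (v + n)) - h (p - n)| ≤ M :=
    hM _ (le_of_max_le_left (by linarith)) _ ⟨by linarith, by linarith⟩
  rw [show p - n + (v + n) = p + v by ring] at hrest
  have := abs_sub_le (h (p + v)) (h (p - n)) (h p)
  have := mul_le_mul_of_nonneg_right hn hε.le
  linarith [hsteps n p (by linarith)]

/-- Writing `g t = t ^ α * L t`, this is `log L (exp u)`. -/
noncomputable def logSlowPart (g : ℝ → ℝ) (α u : ℝ) : ℝ := log (g (exp u)) - α * u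

section

variable {g : ℝ → ℝ} {t₀ α : ℝ}

theorem measurable_logSlowPart (hmeas : Measurable g) : Measurable (logSlowPart g α) := by
  unfold logSlowPart; fun_prop

theorem tendsto_logSlowPart_add_sub (hpos : ∀ s, t₀ ≤ s → 0 < g s)
    (hrv : ∀ x : ℝ, 0 < x → Tendsto (fun t => g (t * x) / g t) atTop (𝓝 (x ^ α))) (v : ℝ) :
    Tendsto (fun u => logSlowPart g α (u + v) - logSlowPart g α u) atTop (𝓝 0) := by
  have hlim := ((continuousAt_log (rpow_pos_of_pos (exp_pos v) α).ne').tendsto.comp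
    ((hrv _ (exp_pos v)).comp tendsto_exp_atTop)).sub_const (α * v)
  rw [log_rpow (exp_pos v), log_exp, sub_self] at hlim
  refine hlim.congr' ?_
  filter_upwards [tendsto_exp_atTop.eventually_ge_atTop t₀,
    (tendsto_exp_atTop.comp (tendsto_atTop_add_const_right _ v tendsto_id)).eventually_ge_atTop t₀]
    with u hu huv
  simp only [Function.comp_apply, id, logSlowPart, ← exp_add] at *
  rw [log_div (hpos _ huv).ne' (hpos _ hu).ne']
  ring

theorem exists_div_le_mul_rpow (hmeas : Measurable g) (hpos : ∀ s, t₀ ≤ s → 0 < g s)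
    (hrv : ∀ x : ℝ, 0 < x → Tendsto (fun t => g (t * x) / g t) atTop (𝓝 (x ^ α)))
    {β : ℝ} (hβ : β < α) :
    ∃ T D, t₀ ≤ T ∧ 0 < T ∧ 0 < D ∧
      ∀ t u, T ≤ t → 0 < u → u ≤ 1 → T ≤ t * u → g (t * u) / g t ≤ D * u ^ β := by
  obtain ⟨U, C, hC⟩ := exists_abs_sub_le_add_mul_of_tendsto_sub (measurable_logSlowPart hmeas)
    (tendsto_logSlowPart_add_sub hpos hrv) (sub_pos.2 hβ)
  refine ⟨max t₀ (exp U), exp C, le_max_left _ _, lt_max_of_lt_right (exp_pos U), exp_pos C,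
    fun t u ht hu hu1 htu => ?_⟩
  have ht0 : 0 < t := (lt_max_of_lt_right (exp_pos U)).trans_le ht
  have hlog : U ≤ log t + log u := by
    rw [← log_mul ht0.ne' hu.ne', ← log_exp U]
    exact log_le_log (exp_pos U) ((le_max_right _ _).trans htu)
  have hbound := (abs_le.1 (hC (log t) (log u) (log_nonpos hu.le hu1) hlog)).2
  simp only [logSlowPart, ← log_mul ht0.ne' hu.ne', exp_log ht0, exp_log (mul_pos ht0 hu)]
    at hbound
  have hgt := hpos t ((le_max_left _ _).trans ht)
  have hgtu := hpos (t * u) ((le_max_left _ _).trans htu)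
  rw [rpow_def_of_pos hu, ← exp_add, ← log_le_iff_le_exp (div_pos hgtu hgt),
    log_div hgtu.ne' hgt.ne']
  rw [log_mul ht0.ne' hu.ne'] at hbound
  linarith

theorem exists_div_le_mul_rpow_of_nonpos (ht₀ : 0 < t₀) (hmeas : Measurable g)
    (hpos : ∀ s, t₀ ≤ s → 0 < g s) (hbdd : ∀ b, t₀ ≤ b → ∃ C, ∀ s ∈ Icc t₀ b, g s ≤ C)
    (hrv : ∀ x : ℝ, 0 < x → Tendsto (fun t => g (t * x) / g t) atTop (𝓝 (x ^ α)))
    {β : ℝ} (hβ : β < α) (hβ0 : β ≤ 0) :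
    ∃ T D, t₀ ≤ T ∧ 0 ≤ D ∧
      ∀ t u, T ≤ t → t₀ / t < u → u ≤ 1 → g (t * u) / g t ≤ D * u ^ β := by
  obtain ⟨T, D, hT₀, hT, hD, hpotter⟩ := exists_div_le_mul_rpow hmeas hpos hrv hβ
  obtain ⟨C, hC⟩ := hbdd T hT₀
  have hgT := hpos T hT₀
  refine ⟨T, D * max 1 (C / g T), hT₀, mul_nonneg hD.le (zero_le_one.trans (le_max_left _ _)),
    fun t u ht hu hu1 => ?_⟩
  have ht0 : 0 < t := hT.trans_le ht
  have htu : t₀ < t * u := by rwa [div_lt_iff₀ ht0, mul_comm] at hu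
  have hu0 : 0 < u := pos_of_mul_pos_right (ht₀.trans htu) ht0.le
  rcases le_or_gt T (t * u) with hTtu | hTtu
  · calc g (t * u) / g t ≤ D * u ^ β := hpotter t u ht hu0 hu1 hTtu
      _ ≤ D * u ^ β * max 1 (C / g T) :=
          le_mul_of_one_le_right (mul_pos hD (rpow_pos_of_pos hu0 β)).le (le_max_left _ _)
      _ = D * max 1 (C / g T) * u ^ β := by ring
  · have hTt : g T / g t ≤ D * u ^ β := by
      have hmul : t * (T / t) = T := by field_simp
      calc g T / g t = g (t * (T / t)) / g t := by rw [hmul]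
        _ ≤ D * (T / t) ^ β := hpotter t _ ht (by positivity) ((div_le_one ht0).2 ht) hmul.ge
        _ ≤ D * u ^ β := by
          refine mul_le_mul_of_nonneg_left (rpow_le_rpow_of_nonpos hu0 ?_ hβ0) hD.le
          rw [le_div_iff₀ ht0]
          linarith [mul_comm u t]
    calc g (t * u) / g t = g (t * u) / g T * (g T / g t) := by field_simp
      _ ≤ max 1 (C / g T) * (D * u ^ β) := by
          refine mul_le_mul ?_ hTt (div_pos hgT (hpos t (hT₀.trans ht))).le
            (zero_le_one.trans (le_max_left _ _))
          exact (div_le_div_of_nonneg_right (hC _ ⟨htu.le, hTtu.le⟩) hgT.le).trans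
            (le_max_right _ _)
      _ = D * max 1 (C / g T) * u ^ β := by ring

theorem tendsto_setIntegral_div (ht₀ : 0 < t₀) (hα : -1 < α) (hmeas : Measurable g)
    (hpos : ∀ s, t₀ ≤ s → 0 < g s) (hbdd : ∀ b, t₀ ≤ b → ∃ C, ∀ s ∈ Icc t₀ b, g s ≤ C)
    (hrv : ∀ x : ℝ, 0 < x → Tendsto (fun t => g (t * x) / g t) atTop (𝓝 (x ^ α))) :
    Tendsto (fun t => ∫ u in Ioc (t₀ / t) 1, g (t * u) / g t) atTop (𝓝 (1 / (α + 1))) := by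
  obtain ⟨β, hβ1, hβ⟩ := exists_between (lt_min hα neg_one_lt_zero)
  obtain ⟨T, D, hT₀, hD, hdom⟩ := exists_div_le_mul_rpow_of_nonpos ht₀ hmeas hpos hbdd hrv
    (hβ.trans_le (min_le_left _ _)) (hβ.le.trans (min_le_right _ _))
  set F : ℝ → ℝ → ℝ := fun t => (Ioi (t₀ / t)).indicator fun u => g (t * u) / g t
  have hF : ∀ᶠ t in atTop, ∫ u in Ioc 0 1, F t u = ∫ u in Ioc (t₀ / t) 1, g (t * u) / g t := by
    filter_upwards [eventually_gt_atTop 0] with t ht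
    rw [setIntegral_indicator measurableSet_Ioi, Ioc_inter_Ioi,
      max_eq_right (div_pos ht₀ ht).le]
  have hlim : Tendsto (fun t => ∫ u in Ioc 0 1, F t u) atTop (𝓝 (∫ u in Ioc 0 1, u ^ α)) := by
    refine tendsto_integral_filter_of_dominated_convergence (fun u => D * u ^ β)
      (.of_forall fun t => ?_) ?_ ?_ ?_
    · exact (((hmeas.comp (measurable_const_mul t)).div_const _).indicator
        measurableSet_Ioi).aestronglyMeasurable
    · filter_upwards [eventually_ge_atTop T] with t ht
      refine (ae_restrict_iff' measurableSet_Ioc).2 (.of_forall fun u hu => ?_)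
      dsimp only [F]
      by_cases hut : u ∈ Ioi (t₀ / t)
      · have ht0 : 0 < t := ht₀.trans_le (hT₀.trans ht)
        have htu : t₀ < t * u := by rw [mem_Ioi, div_lt_iff₀ ht0, mul_comm] at hut; exact hut
        rw [indicator_of_mem hut,
          norm_of_nonneg (div_pos (hpos _ htu.le) (hpos t (hT₀.trans ht))).le]
        exact hdom t u ht hut hu.2
      · rw [indicator_of_notMem hut, norm_zero]
        exact mul_nonneg hD (rpow_nonneg hu.1.le β)
    · refine (intervalIntegrable_iff_integrableOn_Ioc_of_le zero_le_one).1 ?_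
      exact (intervalIntegral.intervalIntegrable_rpow' hβ1).const_mul D
    · refine (ae_restrict_iff' measurableSet_Ioc).2 (.of_forall fun u hu => ?_)
      refine (hrv u hu.1).congr' ?_
      filter_upwards [eventually_gt_atTop (t₀ / u), eventually_gt_atTop 0] with t ht ht0
      dsimp only [F]
      rw [indicator_of_mem]
      rwa [mem_Ioi, div_lt_iff₀ ht0, mul_comm, ← div_lt_iff₀ hu.1]
  rw [← intervalIntegral.integral_of_le zero_le_one, integral_rpow (Or.inl hα), one_rpow,
    zero_rpow (by linarith), sub_zero] at hlim
  exact hlim.congr' hF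

end

theorem intervalIntegral_eq_mul_integral_Ioc_comp_mul (g : ℝ → ℝ) {a t : ℝ} (ht : 0 < t)
    (hat : a ≤ t) : ∫ s in a..t, g s = t * ∫ u in Ioc (a / t) 1, g (t * u) := by
  rw [← intervalIntegral.integral_of_le ((div_le_one ht).2 hat),
    intervalIntegral.integral_comp_mul_left g ht.ne', mul_div_cancel₀ _ ht.ne', mul_one,
    smul_eq_mul, mul_inv_cancel_left₀ ht.ne']

/-- Karamata's integration theorem, divergent case: if `g` is positive, measurable and
locally bounded on `[t₀, ∞)` and regularly varying with index `α > −1`, then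
`∫_{t₀}^t g(s) ds ~ t·g(t)/(α+1)` as `t → ∞`. -/
theorem stmt_17 (g : ℝ → ℝ) (t₀ : ℝ) (ht₀ : 0 < t₀) (α : ℝ) (hα : -1 < α)
    (hmeas : Measurable g) (hpos : ∀ s, t₀ ≤ s → 0 < g s)
    (hbdd : ∀ b, t₀ ≤ b → ∃ C, ∀ s ∈ Set.Icc t₀ b, g s ≤ C)
    (hrv : ∀ x : ℝ, 0 < x →
      Tendsto (fun t => g (t * x) / g t) atTop (nhds (x ^ α))) :
    Tendsto (fun t => (∫ s in t₀..t, g s) / (t * g t / (α + 1))) atTop (nhds 1) := by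
  have hα1 : α + 1 ≠ 0 := by linarith
  have hlim := (tendsto_setIntegral_div ht₀ hα hmeas hpos hbdd hrv).const_mul (α + 1)
  rw [mul_one_div_cancel hα1] at hlim
  refine hlim.congr' ?_
  filter_upwards [eventually_ge_atTop t₀] with t ht
  have ht0 : 0 < t := ht₀.trans_le ht
  rw [intervalIntegral_eq_mul_integral_Ioc_comp_mul g ht0 ht, integral_div]
  field_simp [(hpos t ht).ne']
end

section
/- Let M ~ Poisson(m) with m = n − n^{2/3} (n large enough so that m > 0). Then E[(M − n)·1_{M > n}] ≤ n·exp(−n^{1/3}/2) + 6·exp(−n/6); in particular E[(M−n)₊] → 0 as n → ∞. -/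
/-!
Chernoff's method: for every `λ > 0`,
`(k - n)₊ ≤ e^{λ(k - n) - 1} / λ`, and the Poisson exponential moment is
`E e^{λM} = e^{m(e^λ - 1)}`, so `E (M - n)₊ ≤ e^{m(e^λ - 1) - λn - 1} / λ`.
With `a = n^{1/3}`, `m = a³ - a²` and `λ = 1/a`, the cubic bound `e^λ - 1 ≤ λ + λ²/2 + λ³`
makes the exponent at most `-a/2`, whence `E (M - n)₊ ≤ a e^{-a/2} ≤ n e^{-n^{1/3}/2}`.
-/

open Filter
open Real
open scoped Nat

lemma hasSum_exp_mul_poisson (m t : ℝ) :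
    HasSum (fun k : ℕ => exp (t * k) * (exp (-m) * m ^ k / k !)) (exp (m * (exp t - 1))) := by
  have h := (NormedSpace.expSeries_div_hasSum_exp (m * exp t)).mul_left (exp (-m))
  rw [← exp_eq_exp_ℝ, ← exp_add] at h
  rw [show m * (exp t - 1) = -m + m * exp t by ring]
  refine h.congr_fun fun k => ?_
  rw [mul_pow, ← exp_nat_mul, mul_comm t]
  ring

lemma le_exp_mul_sub_one_div {l : ℝ} (hl : 0 < l) (x : ℝ) : x ≤ exp (l * x - 1) / l := by
  rw [le_div_iff₀ hl, mul_comm]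
  linarith [add_one_le_exp (l * x - 1)]

lemma overshoot_nonneg (n x : ℝ) : 0 ≤ if n < x then x - n else 0 := by
  split_ifs with h
  · exact (sub_pos.2 h).le
  · exact le_rfl

lemma overshoot_le_exp {l : ℝ} (hl : 0 < l) (n x : ℝ) :
    (if n < x then x - n else 0) ≤ exp (l * (x - n) - 1) / l := by
  split_ifs
  · exact le_exp_mul_sub_one_div hl _
  · positivity

theorem tsum_overshoot_poisson_le {m l : ℝ} (hm : 0 ≤ m) (hl : 0 < l) (n : ℝ) :
    ∑' k : ℕ, (if n < (k : ℝ) then (k : ℝ) - n else 0) * (exp (-m) * m ^ k / k !)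
      ≤ exp (m * (exp l - 1) - l * n - 1) / l := by
  set c := exp (-(l * n) - 1) / l
  have hmom := (hasSum_exp_mul_poisson m l).mul_left c
  have hterm : ∀ k : ℕ, (if n < (k : ℝ) then (k : ℝ) - n else 0) * (exp (-m) * m ^ k / k !)
      ≤ c * (exp (l * k) * (exp (-m) * m ^ k / k !)) := by
    intro k
    rw [← mul_assoc]
    refine mul_le_mul_of_nonneg_right ?_ (by positivity)
    calc _ ≤ exp (l * (k - n) - 1) / l := overshoot_le_exp hl n k
      _ = c * exp (l * k) := by
        rw [div_mul_eq_mul_div, ← exp_add]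
        ring_nf
  have hsum : Summable fun k : ℕ =>
      (if n < (k : ℝ) then (k : ℝ) - n else 0) * (exp (-m) * m ^ k / k !) :=
    hmom.summable.of_nonneg_of_le (fun k => mul_nonneg (overshoot_nonneg n k) (by positivity)) hterm
  calc _ ≤ c * exp (m * (exp l - 1)) := hmom.tsum_eq ▸ hsum.tsum_le_tsum hterm hmom.summable
    _ = exp (m * (exp l - 1) - l * n - 1) / l := by
      rw [div_mul_eq_mul_div, ← exp_add]
      ring_nf

lemma exp_sub_one_le_cubic {x : ℝ} (h0 : 0 ≤ x) (h1 : x ≤ 1) :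
    exp x - 1 ≤ x + x ^ 2 / 2 + x ^ 3 := by
  have h := exp_bound' h0 h1 (n := 3) (by norm_num)
  norm_num [Finset.sum_range_succ, Nat.factorial] at h
  nlinarith [pow_nonneg h0 3]

lemma chernoff_exponent_le {a : ℝ} (ha : 1 ≤ a) :
    (a ^ 3 - a ^ 2) * (exp a⁻¹ - 1) - a⁻¹ * a ^ 3 - 1 ≤ -a / 2 := by
  have ha0 : 0 < a := by linarith
  have hm : 0 ≤ a ^ 3 - a ^ 2 := by nlinarith
  have hexp := exp_sub_one_le_cubic (inv_nonneg.2 ha0.le) (inv_le_one_of_one_le₀ ha)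
  calc _ ≤ (a ^ 3 - a ^ 2) * (a⁻¹ + a⁻¹ ^ 2 / 2 + a⁻¹ ^ 3) - a⁻¹ * a ^ 3 - 1 := by gcongr
    _ = -a / 2 - 1 / 2 - a⁻¹ := by field_simp; ring
    _ ≤ -a / 2 := by linarith [inv_pos.2 ha0]

theorem tsum_overshoot_poisson_cube_le {a : ℝ} (ha : 1 ≤ a) :
    ∑' k : ℕ, (if a ^ 3 < (k : ℝ) then (k : ℝ) - a ^ 3 else 0) *
        (exp (-(a ^ 3 - a ^ 2)) * (a ^ 3 - a ^ 2) ^ k / k !)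
      ≤ a * exp (-a / 2) := by
  have ha0 : 0 < a := by linarith
  calc _ ≤ exp ((a ^ 3 - a ^ 2) * (exp a⁻¹ - 1) - a⁻¹ * a ^ 3 - 1) / a⁻¹ :=
        tsum_overshoot_poisson_le (by nlinarith) (inv_pos.2 ha0) _
    _ ≤ exp (-a / 2) / a⁻¹ := by gcongr; exact chernoff_exponent_le ha
    _ = a * exp (-a / 2) := by rw [div_inv_eq_mul, mul_comm]

theorem tsum_overshoot_poisson_rpow_le {n : ℝ} (hn : 1 ≤ n) :
    ∑' k : ℕ, (if n < (k : ℝ) then (k : ℝ) - n else 0) *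
        (exp (-(n - n ^ ((2 : ℝ) / 3))) * (n - n ^ ((2 : ℝ) / 3)) ^ k / k !)
      ≤ n * exp (-(n ^ ((1 : ℝ) / 3)) / 2) := by
  set a := n ^ ((1 : ℝ) / 3)
  have ha : 1 ≤ a := one_le_rpow hn (by norm_num)
  have hcube : a ^ 3 = n := by
    rw [← rpow_natCast, ← rpow_mul (by linarith)]; norm_num
  have hsq : a ^ 2 = n ^ ((2 : ℝ) / 3) := by
    rw [← rpow_natCast, ← rpow_mul (by linarith)]; norm_num
  have h := tsum_overshoot_poisson_cube_le ha
  rw [hcube, hsq] at h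
  exact h.trans (by gcongr; nlinarith)

lemma tendsto_mul_exp_neg_rpow_div_two :
    Tendsto (fun x : ℝ => x * exp (-(x ^ ((1 : ℝ) / 3)) / 2)) atTop (nhds 0) := by
  have h := (tendsto_rpow_mul_exp_neg_mul_atTop_nhds_zero 3 (1 / 2) (by norm_num)).comp
    (tendsto_rpow_atTop (by norm_num : (0 : ℝ) < 1 / 3))
  refine h.congr' ?_
  filter_upwards [eventually_ge_atTop 0] with x hx
  rw [Function.comp_apply, ← rpow_mul hx, show (1 : ℝ) / 3 * 3 = 1 by norm_num, rpow_one]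
  ring_nf

lemma tendsto_overshoot_bound :
    Tendsto (fun x : ℝ => x * exp (-(x ^ ((1 : ℝ) / 3)) / 2) + 6 * exp (-x / 6))
      atTop (nhds 0) := by
  have h : Tendsto (fun x : ℝ => -x / 6) atTop atBot :=
    tendsto_neg_atTop_atBot.atBot_div_const (by norm_num)
  simpa using tendsto_mul_exp_neg_rpow_div_two.add ((tendsto_exp_atBot.comp h).const_mul 6)

/-- For `M ~ Poisson(m)` with `m = n − n^{2/3}` and `n > 1`,
`E[(M − n)·1_{M > n}] ≤ n·exp(−n^{1/3}/2) + 6·exp(−n/6)`, and in particular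
this expectation tends to `0` as `n → ∞`. -/
theorem stmt_19 :
    (∀ n : ℝ, 1 < n →
      (∑' k : ℕ, (if n < (k : ℝ) then ((k : ℝ) - n) else 0) *
          (Real.exp (-(n - n ^ ((2 : ℝ)/3))) * (n - n ^ ((2 : ℝ)/3)) ^ k /
            (Nat.factorial k : ℝ)))
        ≤ n * Real.exp (-(n ^ ((1 : ℝ)/3)) / 2) + 6 * Real.exp (-n / 6)) ∧
    Tendsto (fun n : ℝ =>
      ∑' k : ℕ, (if n < (k : ℝ) then ((k : ℝ) - n) else 0) *
          (Real.exp (-(n - n ^ ((2 : ℝ)/3))) * (n - n ^ ((2 : ℝ)/3)) ^ k /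
            (Nat.factorial k : ℝ))) atTop (nhds 0) := by
  have hbound := fun n (hn : 1 < n) => (tsum_overshoot_poisson_rpow_le hn.le).trans
    (le_add_of_nonneg_right (by positivity : 0 ≤ 6 * exp (-n / 6)))
  refine ⟨hbound, squeeze_zero' ?_ ((eventually_gt_atTop 1).mono hbound) tendsto_overshoot_bound⟩
  filter_upwards [eventually_ge_atTop 1] with n hn
  have hm : 0 ≤ n - n ^ ((2 : ℝ) / 3) := by
    linarith [rpow_le_self_of_one_le hn (by norm_num : (2 : ℝ) / 3 ≤ 1)]
  exact tsum_nonneg fun k => mul_nonneg (overshoot_nonneg _ _) (by positivity)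
end
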